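/- Let α > 0. Assume the outlier model, let π be a nonnegative measurable prior density on symmetric p×p matrices vanishing outside M⁺, and assume that ∫ exp(Q_n^{(α)}(Y | Ω)) π(Ω) dΩ < ∞ for every observation matrix Y = (y_1,…,y_n) with y_i ∈ ℝ^p. Then lim_{z→∞} ∫ exp(Q_n^{(α)}(D(z) | Ω)) π(Ω) dΩ = ∫ exp(Q^{(α)}(D* | Ω)) · exp(−(2π)^{−αp/2} (n − |K|) (1+α)^{1−α/2} |Ω|^{α/2}) π(Ω) dΩ. -/

import Mathlib

open MeasureTheory Matrix Filter Topology

instance matrixMeasurableSpace {m n α : Type*} [MeasurableSpace α] :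
    MeasurableSpace (Matrix m n α) :=
  inferInstanceAs (MeasurableSpace (m → n → α))

/-- Build a symmetric `p × p` matrix from its upper-triangular entries. -/
noncomputable def symOfUpper (p : ℕ) (x : {ij : Fin p × Fin p // ij.1 ≤ ij.2} → ℝ) :
    Matrix (Fin p) (Fin p) ℝ :=
  Matrix.of fun i j => if h : i ≤ j then x ⟨(i, j), h⟩ else x ⟨(j, i), le_of_not_ge h⟩

/-- Density-power objective
`Q^{(α)}((y_i)_{i∈S} | Ω) = (2π)^{−αp/2} |Ω|^{α/2} [ (1/α) ∑_{i∈S} exp(−(α/2) y_iᵀΩy_i)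
  − |S| (1+α)^{1−α/2} ]`. -/
noncomputable def Qdp {p n : ℕ} (α : ℝ)
    (S : Finset (Fin n)) (Y : Fin n → (Fin p → ℝ)) (Ω : Matrix (Fin p) (Fin p) ℝ) : ℝ :=
  (2 * Real.pi) ^ (-(α * (p : ℝ)) / 2) * Ω.det ^ (α / 2) *
    ((1 / α) * ∑ i ∈ S, Real.exp (-(α / 2) * (Y i ⬝ᵥ (Ω *ᵥ Y i))) -
      (S.card : ℝ) * (1 + α) ^ (1 - α / 2))

/-- Observations in the outlier model: `y_i(z) = a_i` for `i ∈ K`, and `a_i + z • b_i` else. -/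
noncomputable def yData {p n : ℕ} (z : ℝ) (K : Finset (Fin n)) (a b : Fin n → (Fin p → ℝ)) :
    Fin n → (Fin p → ℝ) :=
  fun i => if i ∈ K then a i else a i + z • b i

private lemma quad_tendsto {p : ℕ} {Ω : Matrix (Fin p) (Fin p) ℝ} (hΩ : Ω.PosDef)
    (a b : Fin p → ℝ) (hb : b ≠ 0) :
    Tendsto (fun z : ℝ => (a + z • b) ⬝ᵥ Ω *ᵥ (a + z • b)) atTop atTop := by
  have hD : 0 < b ⬝ᵥ Ω *ᵥ b := by simpa using hΩ.dotProduct_mulVec_pos hb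
  have h1 : Tendsto (fun z : ℝ =>
      z * (z * (b ⬝ᵥ Ω *ᵥ b) + (a ⬝ᵥ Ω *ᵥ b + b ⬝ᵥ Ω *ᵥ a)) + a ⬝ᵥ Ω *ᵥ a) atTop atTop := by
    apply tendsto_atTop_add_const_right
    exact tendsto_id.atTop_mul_atTop₀
      (tendsto_atTop_add_const_right _ _ (tendsto_id.atTop_mul_const hD))
  refine h1.congr fun z => ?_
  simp only [mulVec_add, mulVec_smul, add_dotProduct, dotProduct_add, smul_dotProduct,
    dotProduct_smul, smul_eq_mul]
  ring

/-- Limit of the density-power posterior normalizing constant in the outlier model. -/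
theorem stmt15 (p n : ℕ) (α : ℝ) (hα : 0 < α)
    (K L : Finset (Fin n)) (hdisj : Disjoint K L) (hcover : K ∪ L = Finset.univ)
    (a b : Fin n → (Fin p → ℝ)) (hb : ∀ i ∈ L, b i ≠ 0)
    (pr : Matrix (Fin p) (Fin p) ℝ → ℝ) (hpr_meas : Measurable pr)
    (hpr_nonneg : ∀ Ω, 0 ≤ pr Ω)
    (hpr_supp : ∀ Ω : Matrix (Fin p) (Fin p) ℝ, ¬ Ω.PosDef → pr Ω = 0)
    (hint : ∀ Y : Fin n → (Fin p → ℝ),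
      Integrable (fun x : {ij : Fin p × Fin p // ij.1 ≤ ij.2} → ℝ =>
        Real.exp (Qdp α Finset.univ Y (symOfUpper p x)) * pr (symOfUpper p x))) :
    Tendsto (fun z : ℝ =>
        ∫ x, Real.exp (Qdp α Finset.univ (yData z K a b) (symOfUpper p x)) * pr (symOfUpper p x))
      atTop
      (𝓝 (∫ x, Real.exp (Qdp α K a (symOfUpper p x)) *
        Real.exp (-((2 * Real.pi) ^ (-(α * (p : ℝ)) / 2) * ((n : ℝ) - (K.card : ℝ)) *
          (1 + α) ^ (1 - α / 2) * (symOfUpper p x).det ^ (α / 2))) * pr (symOfUpper p x))) := by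
  set c : ℝ := (2 * Real.pi) ^ (-(α * (p : ℝ)) / 2) with hc
  have hcpos : 0 < c := Real.rpow_pos_of_pos (by positivity) _
  set T : ℝ := (1 + α) ^ (1 - α / 2) with hT
  refine tendsto_integral_filter_of_dominated_convergence
    (fun x => Real.exp (Qdp α Finset.univ (0 : Fin n → (Fin p → ℝ)) (symOfUpper p x)) *
      pr (symOfUpper p x)) ?_ ?_ (hint 0) ?_
  · exact Eventually.of_forall fun z => (hint (yData z K a b)).aestronglyMeasurable
  · -- bound
    refine Eventually.of_forall fun z => Eventually.of_forall fun x => ?_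
    set Ω := symOfUpper p x
    by_cases hpr : pr Ω = 0
    · simp [hpr]
    · have hΩ : Ω.PosDef := by
        by_contra h; exact hpr (hpr_supp Ω h)
      have hd : 0 < Ω.det ^ (α / 2) := Real.rpow_pos_of_pos hΩ.det_pos _
      have hQle : Qdp α Finset.univ (yData z K a b) Ω ≤
          Qdp α Finset.univ (0 : Fin n → (Fin p → ℝ)) Ω := by
        unfold Qdp
        simp only [Pi.zero_apply]
        have hsum : ∑ i : Fin n, Real.exp (-(α / 2) *
            (yData z K a b i ⬝ᵥ (Ω *ᵥ yData z K a b i))) ≤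
            ∑ i : Fin n, Real.exp (-(α / 2) *
              ((0 : Fin p → ℝ) ⬝ᵥ (Ω *ᵥ (0 : Fin p → ℝ)))) := by
          refine Finset.sum_le_sum fun i _ => ?_
          have hq : 0 ≤ yData z K a b i ⬝ᵥ (Ω *ᵥ yData z K a b i) := by
            simpa using hΩ.posSemidef.dotProduct_mulVec_nonneg (yData z K a b i)
          have h0 : (0 : Fin p → ℝ) ⬝ᵥ (Ω *ᵥ (0 : Fin p → ℝ)) = 0 := by simp
          rw [h0, mul_zero, Real.exp_zero]
          exact Real.exp_le_one_iff.mpr (by nlinarith)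
        have hca : (0:ℝ) ≤ 1 / α := by positivity
        have := mul_le_mul_of_nonneg_left hsum hca
        nlinarith [mul_le_mul_of_nonneg_left
          (sub_le_sub_right this (((Finset.univ : Finset (Fin n)).card : ℝ) * T)) (le_of_lt (mul_pos hcpos hd))]
      have h1 : ‖Real.exp (Qdp α Finset.univ (yData z K a b) Ω) * pr Ω‖ =
          Real.exp (Qdp α Finset.univ (yData z K a b) Ω) * pr Ω := by
        rw [Real.norm_eq_abs, abs_of_nonneg (mul_nonneg (Real.exp_pos _).le (hpr_nonneg Ω))]
      rw [h1]
      exact mul_le_mul_of_nonneg_right (Real.exp_le_exp.mpr hQle) (hpr_nonneg Ω)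
  · -- pointwise limit
    refine Eventually.of_forall fun x => ?_
    set Ω := symOfUpper p x with hΩdef
    by_cases hpr : pr Ω = 0
    · simp only [hpr, mul_zero]
      exact tendsto_const_nhds
    · have hΩ : Ω.PosDef := by
        by_contra h; exact hpr (hpr_supp Ω h)
      -- sum over L tends to 0
      have hSL : Tendsto (fun z : ℝ => ∑ i ∈ L, Real.exp (-(α / 2) *
          ((a i + z • b i) ⬝ᵥ (Ω *ᵥ (a i + z • b i))))) atTop (𝓝 0) := by
        have : (0:ℝ) = ∑ i ∈ L, (0:ℝ) := by simp
        rw [this]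
        refine tendsto_finset_sum _ fun i hi => ?_
        have hq := quad_tendsto hΩ (a i) (b i) (hb i hi)
        have h2 : Tendsto (fun z : ℝ => -(α / 2) *
            ((a i + z • b i) ⬝ᵥ (Ω *ᵥ (a i + z • b i)))) atTop atBot := by
          have := (hq.const_mul_atTop (by positivity : (0:ℝ) < α / 2))
          have hneg := tendsto_neg_atTop_atBot.comp this
          refine hneg.congr fun z => ?_
          simp [Function.comp, neg_mul]
        exact Real.tendsto_exp_atBot.comp h2
      -- decompose Q
      set SK : ℝ := ∑ i ∈ K, Real.exp (-(α / 2) * (a i ⬝ᵥ (Ω *ᵥ a i))) with hSK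
      have hQeq : ∀ z : ℝ, Qdp α Finset.univ (yData z K a b) Ω =
          (c * Ω.det ^ (α / 2) * (1 / α)) * (∑ i ∈ L, Real.exp (-(α / 2) *
            ((a i + z • b i) ⬝ᵥ (Ω *ᵥ (a i + z • b i))))) +
          (c * Ω.det ^ (α / 2) * ((1 / α) * SK - (n : ℝ) * T)) := by
        intro z
        unfold Qdp
        rw [← hcover, Finset.sum_union hdisj]
        have hKs : ∑ i ∈ K, Real.exp (-(α / 2) *
            (yData z K a b i ⬝ᵥ (Ω *ᵥ yData z K a b i))) = SK := by
          refine Finset.sum_congr rfl fun i hi => ?_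
          simp [yData, hi]
        have hLs : ∑ i ∈ L, Real.exp (-(α / 2) *
            (yData z K a b i ⬝ᵥ (Ω *ᵥ yData z K a b i))) =
            ∑ i ∈ L, Real.exp (-(α / 2) *
              ((a i + z • b i) ⬝ᵥ (Ω *ᵥ (a i + z • b i)))) := by
          refine Finset.sum_congr rfl fun i hi => ?_
          have hiK : i ∉ K := Finset.disjoint_right.mp hdisj hi
          simp [yData, hiK]
        rw [hKs, hLs]
        have hcard : ((Finset.univ : Finset (Fin n)).card : ℝ) = (n : ℝ) := by simp
        rw [hcover, hcard]
        ring
      have hQ : Tendsto (fun z : ℝ => Qdp α Finset.univ (yData z K a b) Ω) atTop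
          (𝓝 (Qdp α K a Ω + -(c * ((n : ℝ) - (K.card : ℝ)) * T * Ω.det ^ (α / 2)))) := by
        have h3 := (hSL.const_mul (c * Ω.det ^ (α / 2) * (1 / α))).add_const
          (c * Ω.det ^ (α / 2) * ((1 / α) * SK - (n : ℝ) * T))
        have heq : Qdp α K a Ω + -(c * ((n : ℝ) - (K.card : ℝ)) * T * Ω.det ^ (α / 2)) =
            (c * Ω.det ^ (α / 2) * (1 / α)) * 0 +
            (c * Ω.det ^ (α / 2) * ((1 / α) * SK - (n : ℝ) * T)) := by
          unfold Qdp
          rw [← hSK, ← hc, ← hT]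
          ring
        rw [heq]
        exact h3.congr fun z => (hQeq z).symm
      have hfin := ((Real.continuous_exp.tendsto _).comp hQ).mul_const (pr Ω)
      rw [Real.exp_add] at hfin
      exact hfin
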